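/- Let σ be a skew Young diagram with row lengths m₁, ..., m_r, and consider fillings of σ with 1,...,n (n = Σmᵢ) that are strictly increasing along rows and strictly increasing down each 45° diagonal. The number of such fillings equals the number of elements w of Sₙ with w⁻¹e₁ and w⁻¹e₂ both lower triangular, where (e₁,e₂) is the distinguished nilpotent pair attached to σ (e₁ the row-shift nilpotent, e₂ the column-shift nilpotent). -/
import Mathlib


/-- The admissible fillings of a connected skew Young diagram `σ` (rows strictly increasing,
`45°`-diagonals strictly increasing) are equinumerous with the permutations `w ∈ Sₙ` such
that `w⁻¹·e₁` and `w⁻¹·e₂` are lower triangular, where `(e₁, e₂)` is the distinguished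
nilpotent pair attached to `σ` (`e₁` the row-shift nilpotent, `e₂` the column-shift
nilpotent) and `(w⁻¹·M) p q = M (w p) (w q)`.

The skew diagram is encoded by the ladder multisegment `Δ_k = [a_k, b_k]`
(`a₁ > ⋯ > a_r`, `b₁ > ⋯ > b_r`): its boxes are pairs `(k, c)` with `a_k ≤ c ≤ b_k`; the
row-successor of `(k, c)` is `(k, c+1)` and the column-successor is `(k+1, c-1)`.  The
boxes are numbered `1, …, n` in row-reading order by the bijection `β`. -/
theorem stmt_10 {r n : ℕ} (a b : Fin r → ℤ) (hab : ∀ i, a i ≤ b i)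
    (ha : ∀ i j : Fin r, i < j → a j < a i)
    (hb : ∀ i j : Fin r, i < j → b j < b i)
    (β : {p : Fin r × ℤ // a p.1 ≤ p.2 ∧ p.2 ≤ b p.1} ≃ Fin n)
    (hβ : ∀ p q : {p : Fin r × ℤ // a p.1 ≤ p.2 ∧ p.2 ≤ b p.1},
      β p < β q ↔ (p.1.1 < q.1.1 ∨ (p.1.1 = q.1.1 ∧ p.1.2 < q.1.2)))
    (e₁ e₂ : Matrix (Fin n) (Fin n) ℂ)
    (he₁ : ∀ x y : Fin n,
      e₁ x y = if (β.symm x).1.1 = (β.symm y).1.1 ∧ (β.symm x).1.2 = (β.symm y).1.2 + 1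
        then 1 else 0)
    (he₂ : ∀ x y : Fin n,
      e₂ x y = if ((β.symm x).1.1 : ℕ) = ((β.symm y).1.1 : ℕ) + 1 ∧
          (β.symm x).1.2 + 1 = (β.symm y).1.2
        then 1 else 0) :
    Nat.card {w : Equiv.Perm (Fin n) //
        ∀ x y : Fin n, x < y → e₁ (w x) (w y) = 0 ∧ e₂ (w x) (w y) = 0}
      = Nat.card {g : {p : Fin r × ℤ // a p.1 ≤ p.2 ∧ p.2 ≤ b p.1} ≃ Fin n //
          (∀ p q : {p : Fin r × ℤ // a p.1 ≤ p.2 ∧ p.2 ≤ b p.1},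
            p.1.1 = q.1.1 → p.1.2 + 1 = q.1.2 → g p < g q) ∧
          (∀ p q : {p : Fin r × ℤ // a p.1 ≤ p.2 ∧ p.2 ≤ b p.1},
            (p.1.1 : ℕ) + 1 = (q.1.1 : ℕ) → p.1.2 = q.1.2 + 1 → g p < g q)} := by
  refine Nat.card_congr (Equiv.subtypeEquiv
    (⟨fun w => β.trans w.symm, fun g => g.symm.trans β,
      fun w => by ext x; simp, fun g => by ext p; simp⟩ :
        Equiv.Perm (Fin n) ≃ ({p : Fin r × ℤ // a p.1 ≤ p.2 ∧ p.2 ≤ b p.1} ≃ Fin n))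
    (fun w => ?_))
  simp only [Equiv.coe_fn_mk]
  constructor
  · intro hP
    constructor
    · intro p q hrow hcol
      have hne : (β.trans w.symm) p ≠ (β.trans w.symm) q := by
        intro h
        have hpq : p = q := (β.trans w.symm).injective h
        rw [hpq] at hcol; omega
      rcases lt_or_gt_of_ne hne with h | h
      · exact h
      · exfalso
        have h0 := (hP _ _ h).1
        rw [he₁] at h0
        simp only [Equiv.trans_apply, Equiv.apply_symm_apply, Equiv.symm_apply_apply] at h0
        rw [if_pos ⟨hrow.symm, hcol.symm⟩] at h0
        exact one_ne_zero h0
    · intro p q hrow hcol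
      have hne : (β.trans w.symm) p ≠ (β.trans w.symm) q := by
        intro h
        have hpq : p = q := (β.trans w.symm).injective h
        rw [hpq] at hcol; omega
      rcases lt_or_gt_of_ne hne with h | h
      · exact h
      · exfalso
        have h0 := (hP _ _ h).2
        rw [he₂] at h0
        simp only [Equiv.trans_apply, Equiv.apply_symm_apply, Equiv.symm_apply_apply] at h0
        rw [if_pos ⟨hrow.symm, hcol.symm⟩] at h0
        exact one_ne_zero h0
  · intro hQ x y hxy
    constructor
    · rw [he₁, if_neg]
      rintro ⟨h1, h2⟩
      have h3 := hQ.1 (β.symm (w y)) (β.symm (w x)) h1.symm h2.symm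
      simp only [Equiv.trans_apply, Equiv.apply_symm_apply, Equiv.symm_apply_apply] at h3
      exact absurd h3 (not_lt.2 hxy.le)
    · rw [he₂, if_neg]
      rintro ⟨h1, h2⟩
      have h3 := hQ.2 (β.symm (w y)) (β.symm (w x)) h1.symm h2.symm
      simp only [Equiv.trans_apply, Equiv.apply_symm_apply, Equiv.symm_apply_apply] at h3
      exact absurd h3 (not_lt.2 hxy.le)
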